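/- For every sequential vset-automaton A there exists a disjunctive functional vset-automaton A′ such that ⟦A′⟧(d) = ⟦A⟧(d) for every document d. -/

import Mathlib

namespace Spanners

open scoped Classical

/-! ### Spans and mappings -/

abbrev Span := ℕ × ℕ

abbrev VMapping := ℕ → Option Span

def emptyMapping : VMapping := fun _ => none

def mapDom (μ : VMapping) : Set ℕ := {x | μ x ≠ none}

/-- Two mappings are compatible if they agree on every common variable. -/
def Compatible (μ1 μ2 : VMapping) : Prop :=
  ∀ x s1 s2, μ1 x = some s1 → μ2 x = some s2 → s1 = s2

def DisjointDom (μ1 μ2 : VMapping) : Prop :=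
  ∀ x, μ1 x = none ∨ μ2 x = none

def munion (μ1 μ2 : VMapping) : VMapping := fun x =>
  match μ1 x with
  | some s => some s
  | none => μ2 x

def minsert (x : ℕ) (s : Span) (μ : VMapping) : VMapping :=
  fun y => if y = x then some s else μ y

/-- Natural join of two sets of mappings. -/
def joinSet (S1 S2 : Set VMapping) : Set VMapping :=
  {μ | ∃ μ1 ∈ S1, ∃ μ2 ∈ S2, Compatible μ1 μ2 ∧ μ = munion μ1 μ2}

/-- Difference of two sets of mappings. -/
def diffSet (S1 S2 : Set VMapping) : Set VMapping :=
  {μ1 | μ1 ∈ S1 ∧ ∀ μ2 ∈ S2, ¬ Compatible μ1 μ2}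

/-- Restriction of a mapping to a set of variables. -/
noncomputable def restrictMap (μ : VMapping) (V : Set ℕ) : VMapping :=
  fun x => if x ∈ V then μ x else none

/-- Projection of a set of mappings to a set of variables. -/
def projSet (V : Set ℕ) (S : Set VMapping) : Set VMapping :=
  {μ' | ∃ μ ∈ S, μ' = restrictMap μ V}

/-! ### Regex formulas -/

inductive RGX (Sig : Type) where
  | empty : RGX Sig
  | eps : RGX Sig
  | letter : Sig → RGX Sig
  | union : RGX Sig → RGX Sig → RGX Sig
  | concat : RGX Sig → RGX Sig → RGX Sig
  | star : RGX Sig → RGX Sig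
  | bind : ℕ → RGX Sig → RGX Sig

variable {Sig : Type}

def RGX.vars : RGX Sig → Finset ℕ
  | .empty => ∅
  | .eps => ∅
  | .letter _ => ∅
  | .union a b => a.vars ∪ b.vars
  | .concat a b => a.vars ∪ b.vars
  | .star a => a.vars
  | .bind x a => insert x a.vars

def RGX.size : RGX Sig → ℕ
  | .empty => 1
  | .eps => 1
  | .letter _ => 1
  | .union a b => a.size + b.size + 1
  | .concat a b => a.size + b.size + 1
  | .star a => a.size + 1
  | .bind _ a => a.size + 1

/-- The schemaless semantics `⟨α⟩(d)`: `RMatch α d i j μ` means `([i,j⟩, μ) ∈ ⟨α⟩(d)`. -/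
inductive RMatch : RGX Sig → List Sig → ℕ → ℕ → VMapping → Prop where
  | eps {d : List Sig} {i : ℕ} (h1 : 1 ≤ i) (h2 : i ≤ d.length + 1) :
      RMatch .eps d i i emptyMapping
  | letter {d : List Sig} {i : ℕ} {σ : Sig} (h1 : 1 ≤ i) (h2 : d[i - 1]? = some σ) :
      RMatch (.letter σ) d i (i + 1) emptyMapping
  | unionL {a b : RGX Sig} {d : List Sig} {i j : ℕ} {μ : VMapping}
      (h : RMatch a d i j μ) : RMatch (.union a b) d i j μ
  | unionR {a b : RGX Sig} {d : List Sig} {i j : ℕ} {μ : VMapping}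
      (h : RMatch b d i j μ) : RMatch (.union a b) d i j μ
  | concat {a b : RGX Sig} {d : List Sig} {i k j : ℕ} {μ1 μ2 : VMapping}
      (h1 : RMatch a d i k μ1) (h2 : RMatch b d k j μ2) (hd : DisjointDom μ1 μ2) :
      RMatch (.concat a b) d i j (munion μ1 μ2)
  | bind {x : ℕ} {a : RGX Sig} {d : List Sig} {i j : ℕ} {μ : VMapping}
      (h : RMatch a d i j μ) (hx : μ x = none) :
      RMatch (.bind x a) d i j (minsert x (i, j) μ)
  | starNil {a : RGX Sig} {d : List Sig} {i : ℕ} (h1 : 1 ≤ i) (h2 : i ≤ d.length + 1) :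
      RMatch (.star a) d i i emptyMapping
  | starCons {a : RGX Sig} {d : List Sig} {i k j : ℕ} {μ1 μ2 : VMapping}
      (h1 : RMatch a d i k μ1) (h2 : RMatch (.star a) d k j μ2) (hd : DisjointDom μ1 μ2) :
      RMatch (.star a) d i j (munion μ1 μ2)

/-- `⟦α⟧(d)`: mappings extracted with the full span. -/
def rgxSem (α : RGX Sig) (d : List Sig) : Set VMapping :=
  {μ | RMatch α d 1 (d.length + 1) μ}

/-- Sequential regex formulas. -/
def RGX.Sequential : RGX Sig → Prop
  | .empty => True
  | .eps => True
  | .letter _ => True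
  | .union a b => a.Sequential ∧ b.Sequential
  | .concat a b => a.Sequential ∧ b.Sequential ∧ Disjoint a.vars b.vars
  | .star a => a.Sequential ∧ a.vars = ∅
  | .bind x a => a.Sequential ∧ x ∉ a.vars

/-- Variable-free words over the alphabet (built from ε, letters and concatenation). -/
inductive RGX.IsWord : RGX Sig → Prop where
  | eps : RGX.IsWord .eps
  | letter (σ : Sig) : RGX.IsWord (.letter σ)
  | concat {a b : RGX Sig} : a.IsWord → b.IsWord → RGX.IsWord (.concat a b)

/-- Functional for a set `V` of variables. -/
inductive FunctionalFor : RGX Sig → Finset ℕ → Prop where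
  | word {α : RGX Sig} (h : α.IsWord) : FunctionalFor α ∅
  | union {a b : RGX Sig} {V : Finset ℕ} (ha : FunctionalFor a V) (hb : FunctionalFor b V) :
      FunctionalFor (.union a b) V
  | concat {a b : RGX Sig} {V : Finset ℕ} (V1 : Finset ℕ) (hsub : V1 ⊆ V)
      (ha : FunctionalFor a V1) (hb : FunctionalFor b (V \ V1)) :
      FunctionalFor (.concat a b) V
  | star {a : RGX Sig} (h : FunctionalFor a ∅) : FunctionalFor (.star a) ∅
  | bind {x : ℕ} {a : RGX Sig} {V : Finset ℕ} (h : FunctionalFor a (V.erase x)) :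
      FunctionalFor (.bind x a) V

def RGX.Functional (α : RGX Sig) : Prop := FunctionalFor α α.vars

/-- Disjunctive functional regex formulas: finite disjunctions of functional regex formulas. -/
inductive DisjFunctional : RGX Sig → Prop where
  | base {γ : RGX Sig} (h : γ.Functional) : DisjFunctional γ
  | union {a b : RGX Sig} (ha : DisjFunctional a) (hb : DisjFunctional b) :
      DisjFunctional (.union a b)

/-- Number of disjuncts of a (disjunctive) regex formula. -/
def countDisjuncts : RGX Sig → ℕ
  | .union a b => countDisjuncts a + countDisjuncts b
  | _ => 1

/-- Disjunction-free regex formulas. -/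
def RGX.DisjFree : RGX Sig → Prop
  | .union _ _ => False
  | .concat a b => a.DisjFree ∧ b.DisjFree
  | .star a => a.DisjFree
  | .bind _ a => a.DisjFree
  | _ => True

/-- `γ` is synchronized for `x`: no subformula `γ1 ∨ γ2` contains `x`. -/
def RGX.SyncFor : RGX Sig → ℕ → Prop
  | .union a b, x => (x ∉ a.vars ∧ x ∉ b.vars) ∧ a.SyncFor x ∧ b.SyncFor x
  | .concat a b, x => a.SyncFor x ∧ b.SyncFor x
  | .star a, x => a.SyncFor x
  | .bind _ a, x => a.SyncFor x
  | _, _ => True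

/-- Concatenation of a list of regex formulas. -/
def concatList : List (RGX Sig) → RGX Sig
  | [] => .eps
  | [α] => α
  | α :: rest => .concat α (concatList rest)

/-- Disjunction of a list of regex formulas. -/
def disjList : List (RGX Sig) → RGX Sig
  | [] => .empty
  | [α] => α
  | α :: rest => .union α (disjList rest)

/-! ### vset-automata -/

inductive VLabel (Sig : Type) where
  | eps : VLabel Sig
  | letter : Sig → VLabel Sig
  | openv : ℕ → VLabel Sig
  | closev : ℕ → VLabel Sig
deriving DecidableEq

structure VA (Sig : Type) [DecidableEq Sig] where
  q0 : ℕ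
  F : Finset ℕ
  δ : Finset (ℕ × VLabel Sig × ℕ)

variable [DecidableEq Sig]

/-- The states of a VA: the initial state and all states mentioned in `F` or in transitions. -/
def statesOf (A : VA Sig) : Finset ℕ :=
  insert A.q0 (A.F ∪ A.δ.image (fun t => t.1) ∪ A.δ.image (fun t => t.2.2))

def labelVars : VLabel Sig → Finset ℕ
  | .openv x => {x}
  | .closev x => {x}
  | _ => ∅

/-- `Vars(A)`: the variables mentioned in the transitions of `A`. -/
def varsOf (A : VA Sig) : Finset ℕ := A.δ.biUnion (fun t => labelVars t.2.1)

/-- Total size of a VA: number of states plus number of transitions. -/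
def vaSize (A : VA Sig) : ℕ := (statesOf A).card + A.δ.card

/-- `A.PathFrom p ls q`: a path (run segment) from `p` to `q` with label sequence `ls`. -/
inductive VA.PathFrom (A : VA Sig) : ℕ → List (VLabel Sig) → ℕ → Prop where
  | nil (q : ℕ) : VA.PathFrom A q [] q
  | cons {p q r : ℕ} {l : VLabel Sig} {ls : List (VLabel Sig)}
      (h : (p, l, q) ∈ A.δ) (htail : VA.PathFrom A q ls r) : VA.PathFrom A p (l :: ls) r

/-- The word (document) read by a sequence of labels. -/
def readWord : List (VLabel Sig) → List Sig :=
  List.filterMap fun l => match l with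
    | VLabel.letter σ => some σ
    | _ => none

def isLetterL : VLabel Sig → Bool
  | .letter _ => true
  | _ => false

/-- The current position in the document just before executing the `k`-th label. -/
def posAt (ls : List (VLabel Sig)) (k : ℕ) : ℕ := 1 + (ls.take k).countP isLetterL

/-- Validity of a run, given by its label sequence. -/
def ValidLabels (ls : List (VLabel Sig)) : Prop :=
  ∀ x : ℕ,
    ls.count (VLabel.openv x) ≤ 1 ∧
    ls.count (VLabel.closev x) ≤ 1 ∧
    ((VLabel.openv x) ∈ ls ↔ (VLabel.closev x) ∈ ls) ∧
    ∀ i j : ℕ, ls[i]? = some (VLabel.openv x) → ls[j]? = some (VLabel.closev x) →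
      posAt ls i ≤ posAt ls j

/-- The mapping `μ_ρ` extracted from a (valid accepting) run with label sequence `ls`. -/
def runMapping (ls : List (VLabel Sig)) : VMapping := fun x =>
  if (VLabel.openv x) ∈ ls then
    some (posAt ls (ls.idxOf (VLabel.openv x)), posAt ls (ls.idxOf (VLabel.closev x)))
  else none

/-- `ls` is the label sequence of an accepting run of `A`. -/
def AcceptsWith (A : VA Sig) (ls : List (VLabel Sig)) : Prop :=
  ∃ qf, VA.PathFrom A A.q0 ls qf ∧ qf ∈ A.F

/-- `⟦A⟧(d)`. -/
def vaSem (A : VA Sig) (d : List Sig) : Set VMapping :=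
  {μ | ∃ ls, AcceptsWith A ls ∧ readWord ls = d ∧ ValidLabels ls ∧ μ = runMapping ls}

/-- A VA is sequential if all of its accepting runs are valid. -/
def VA.Sequential (A : VA Sig) : Prop := ∀ ls, AcceptsWith A ls → ValidLabels ls

/-- A run from the initial state to `q` that is a prefix of an accepting run. -/
def PrefixRun (A : VA Sig) (ls : List (VLabel Sig)) (q : ℕ) : Prop :=
  VA.PathFrom A A.q0 ls q ∧ ∃ ls' qf, VA.PathFrom A q ls' qf ∧ qf ∈ A.F

/-- `A` is semi-functional for the variable `x`: no state has extended configuration `d`. -/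
def SemiFunctionalFor (A : VA Sig) (x : ℕ) : Prop :=
  ¬ ∃ q ls1 ls2, PrefixRun A ls1 q ∧ PrefixRun A ls2 q ∧
      (VLabel.closev x) ∈ ls1 ∧ (VLabel.openv x) ∉ ls2

def SemiFunctionalForSet (A : VA Sig) (X : Finset ℕ) : Prop :=
  ∀ x ∈ X, SemiFunctionalFor A x

/-- Functional VA: sequential, and every accepting run opens and closes every variable. -/
def FunctionalVA (A : VA Sig) : Prop :=
  A.Sequential ∧ ∀ ls, AcceptsWith A ls → ∀ x ∈ varsOf A,
    (VLabel.openv x) ∈ ls ∧ (VLabel.closev x) ∈ ls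

/-- `l` has a unique target state in `A`. -/
def UniqueTarget (A : VA Sig) (l : VLabel Sig) : Prop :=
  ∃ qt : ℕ, ∀ p q : ℕ, (p, l, q) ∈ A.δ → q = qt

/-- `A` is synchronized for the variable `x`. -/
def SyncForVA (A : VA Sig) (x : ℕ) : Prop :=
  UniqueTarget A (VLabel.openv x) ∧ UniqueTarget A (VLabel.closev x) ∧
    ((∀ ls, AcceptsWith A ls → (VLabel.openv x) ∈ ls ∧ (VLabel.closev x) ∈ ls) ∨
     (∀ ls, AcceptsWith A ls → (VLabel.openv x) ∉ ls ∧ (VLabel.closev x) ∉ ls))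

/-- `A` is the disjunctive functional VA with functional components `parts`. -/
def DisjFunctionalVAWith (A : VA Sig) (parts : List (VA Sig)) : Prop :=
  (∀ B ∈ parts, FunctionalVA B) ∧
  (parts.Pairwise fun B C => Disjoint (statesOf B) (statesOf C)) ∧
  (∀ B ∈ parts, A.q0 ∉ statesOf B) ∧
  A.F = parts.foldr (fun B s => B.F ∪ s) (∅ : Finset ℕ) ∧
  A.δ = (parts.map (fun B => (A.q0, (VLabel.eps : VLabel Sig), B.q0))).toFinset
        ∪ parts.foldr (fun B s => B.δ ∪ s) (∅ : Finset (ℕ × VLabel Sig × ℕ))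

def DisjFunctionalVA (A : VA Sig) : Prop := ∃ parts, DisjFunctionalVAWith A parts

/-! ### 3CNF formulas -/

/-- A 3CNF clause over `n` Boolean variables: a triple of literals; `(i, true)` is `xᵢ`,
`(i, false)` is `¬xᵢ`. -/
def Clause3 (n : ℕ) : Type := (Fin n × Bool) × (Fin n × Bool) × (Fin n × Bool)

def litsOf {n : ℕ} (c : Clause3 n) : List (Fin n × Bool) := [c.1, c.2.1, c.2.2]

def clauseSat {n : ℕ} (τ : Fin n → Bool) (c : Clause3 n) : Prop :=
  ∃ l ∈ litsOf c, τ l.1 = l.2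

def Sat3 {n m : ℕ} (φ : Fin m → Clause3 n) : Prop :=
  ∃ τ : Fin n → Bool, ∀ j, clauseSat τ (φ j)

end Spanners

/-!
A run of a sequential automaton closes exactly the variables it opens. For every set `X` of
variables of `A`, take the product of `A` with a record of the variables opened so far, keep only
the transitions whose variables lie in `X`, and accept only once all of `X` is open: this component
is functional, and its accepting runs are the accepting runs of `A` opening exactly `X`. Tagging
the states of each component with `X` makes the components pairwise disjoint, so an ε-branching
from a fresh initial state to all of them yields a disjunctive functional automaton whose runs
are those of `A` behind one extra ε-step.
-/

namespace Spanners

variable {Sig : Type}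

section Labels

def openedVars : VLabel Sig → Finset ℕ
  | .openv x => {x}
  | _ => ∅

def opensOf : List (VLabel Sig) → Finset ℕ
  | [] => ∅
  | l :: ls => openedVars l ∪ opensOf ls

lemma mem_opensOf {ls : List (VLabel Sig)} {x : ℕ} : x ∈ opensOf ls ↔ .openv x ∈ ls := by
  induction ls with
  | nil => simp [opensOf]
  | cons l ls ih => cases l <;> simp [opensOf, openedVars, ih, eq_comm]

lemma readWord_eps_cons (ls : List (VLabel Sig)) : readWord (.eps :: ls) = readWord ls := by
  simp [readWord]

lemma posAt_eps_cons_succ (ls : List (VLabel Sig)) (k : ℕ) :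
    posAt (.eps :: ls) (k + 1) = posAt ls k := by
  simp [posAt, isLetterL]

lemma openedVars_subset_labelVars (l : VLabel Sig) : openedVars l ⊆ labelVars l := by
  cases l <;> simp [openedVars, labelVars]

end Labels

variable [DecidableEq Sig]

lemma validLabels_eps_cons (ls : List (VLabel Sig)) :
    ValidLabels (.eps :: ls) ↔ ValidLabels ls := by
  refine forall_congr' fun x => ?_
  simp only [List.count_cons, List.mem_cons, reduceCtorEq, false_or, beq_iff_eq, if_false,
    Nat.add_zero]
  refine and_congr_right' (and_congr_right' (and_congr_right' ?_))
  rw [← Nat.and_forall_add_one]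
  simp only [List.getElem?_cons_zero, List.getElem?_cons_succ, Option.some.injEq, reduceCtorEq,
    false_imp_iff, implies_true, true_and]
  refine forall_congr' fun i => ?_
  rw [← Nat.and_forall_add_one]
  simp [posAt_eps_cons_succ]

lemma runMapping_eps_cons (ls : List (VLabel Sig)) :
    runMapping (.eps :: ls) = runMapping ls := by
  funext x
  simp [runMapping, List.idxOf_cons_ne, posAt_eps_cons_succ]

lemma ValidLabels.labelVars_subset_opensOf {ls : List (VLabel Sig)} (hv : ValidLabels ls) :
    ∀ l ∈ ls, labelVars l ⊆ opensOf ls := by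
  rintro (_ | _ | x | x) hl <;> simp only [labelVars, Finset.empty_subset,
    Finset.singleton_subset_iff, mem_opensOf]
  · exact hl
  · exact (hv x).2.2.1.2 hl

lemma mem_statesOf_of_mem_δ {A : VA Sig} {p q : ℕ} {l : VLabel Sig} (ht : (p, l, q) ∈ A.δ) :
    p ∈ statesOf A ∧ q ∈ statesOf A := by
  simp only [statesOf, Finset.mem_insert, Finset.mem_union, Finset.mem_image]
  exact ⟨.inr (.inl (.inr ⟨_, ht, rfl⟩)), .inr (.inr ⟨_, ht, rfl⟩)⟩

lemma q0_mem_statesOf (A : VA Sig) : A.q0 ∈ statesOf A := Finset.mem_insert_self _ _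

lemma mem_statesOf_of_mem_F {A : VA Sig} {q : ℕ} (hq : q ∈ A.F) : q ∈ statesOf A := by
  simp [statesOf, hq]

lemma VA.PathFrom.mono {A B : VA Sig} (hδ : A.δ ⊆ B.δ) {p q : ℕ} {ls : List (VLabel Sig)}
    (hp : A.PathFrom p ls q) : B.PathFrom p ls q := by
  induction hp with
  | nil q => exact .nil q
  | cons ht _ ih => exact .cons (hδ ht) ih

lemma VA.PathFrom.labelVars_subset {A : VA Sig} {p q : ℕ} {ls : List (VLabel Sig)}
    (hp : A.PathFrom p ls q) : ∀ l ∈ ls, labelVars l ⊆ varsOf A := by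
  induction hp with
  | nil q => simp
  | cons ht _ ih =>
    simp only [List.mem_cons, forall_eq_or_imp]
    exact ⟨fun x hx => Finset.mem_biUnion.2 ⟨_, ht, hx⟩, ih⟩

section DisjUnion

def VA.disjUnion (q0 : ℕ) (parts : List (VA Sig)) : VA Sig where
  q0 := q0
  F := parts.foldr (fun B s => B.F ∪ s) ∅
  δ := (parts.map fun B => (q0, VLabel.eps, B.q0)).toFinset ∪
    parts.foldr (fun B s => B.δ ∪ s) ∅

lemma mem_foldr_union {α β : Type} [DecidableEq α] {f : β → Finset α} {L : List β} {a : α} :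
    a ∈ L.foldr (fun b s => f b ∪ s) ∅ ↔ ∃ b ∈ L, a ∈ f b := by
  induction L with
  | nil => simp
  | cons b L ih => simp [ih]

variable {q0 : ℕ} {parts : List (VA Sig)}

lemma mem_disjUnion_δ {t : ℕ × VLabel Sig × ℕ} :
    t ∈ (VA.disjUnion q0 parts).δ ↔
      (∃ B ∈ parts, t = (q0, .eps, B.q0)) ∨ ∃ B ∈ parts, t ∈ B.δ := by
  simp [VA.disjUnion, mem_foldr_union (f := VA.δ), eq_comm]

def PartsDisjoint (q0 : ℕ) (parts : List (VA Sig)) : Prop :=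
  parts.Pairwise (fun B C => Disjoint (statesOf B) (statesOf C)) ∧ ∀ B ∈ parts, q0 ∉ statesOf B

lemma PartsDisjoint.eq_of_mem_statesOf (h : PartsDisjoint q0 parts) {B C : VA Sig} {s : ℕ}
    (hB : B ∈ parts) (hC : C ∈ parts) (hsB : s ∈ statesOf B) (hsC : s ∈ statesOf C) : B = C := by
  have : Std.Symm fun B C : VA Sig => Disjoint (statesOf B) (statesOf C) :=
    ⟨fun _ _ hBC => hBC.symm⟩
  by_contra hne
  exact Finset.disjoint_left.1 (h.1.forall hB hC hne) hsB hsC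

lemma VA.PathFrom.of_disjUnion (h : PartsDisjoint q0 parts) {B : VA Sig} (hB : B ∈ parts)
    {s f : ℕ} {ls : List (VLabel Sig)} (hp : (VA.disjUnion q0 parts).PathFrom s ls f)
    (hs : s ∈ statesOf B) : B.PathFrom s ls f ∧ f ∈ statesOf B := by
  induction hp with
  | nil q => exact ⟨.nil q, hs⟩
  | cons ht _ ih =>
    rcases mem_disjUnion_δ.1 ht with ⟨C, -, he⟩ | ⟨C, hC, htC⟩
    · simp only [Prod.mk.injEq] at he
      exact absurd (he.1 ▸ hs) (h.2 B hB)
    · obtain rfl := h.eq_of_mem_statesOf hC hB (mem_statesOf_of_mem_δ htC).1 hs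
      obtain ⟨hpath, hf⟩ := ih (mem_statesOf_of_mem_δ htC).2
      exact ⟨.cons htC hpath, hf⟩

lemma acceptsWith_disjUnion_iff (h : PartsDisjoint q0 parts) {ls : List (VLabel Sig)} :
    AcceptsWith (VA.disjUnion q0 parts) ls ↔
      ∃ B ∈ parts, ∃ ls', ls = .eps :: ls' ∧ AcceptsWith B ls' := by
  constructor
  · rintro ⟨qf, hp, hqf⟩
    obtain ⟨C, hC, hqfC⟩ := mem_foldr_union.1 hqf
    cases hp with
    | nil => exact absurd (mem_statesOf_of_mem_F hqfC) (h.2 C hC)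
    | cons ht htail =>
      rcases mem_disjUnion_δ.1 ht with ⟨B, hB, he⟩ | ⟨B, hB, htB⟩
      · simp only [Prod.mk.injEq] at he
        obtain ⟨-, rfl, rfl⟩ := he
        obtain ⟨hpath, hf⟩ := htail.of_disjUnion h hB (q0_mem_statesOf B)
        obtain rfl := h.eq_of_mem_statesOf hC hB (mem_statesOf_of_mem_F hqfC) hf
        exact ⟨C, hC, _, rfl, qf, hpath, hqfC⟩
      · exact absurd (mem_statesOf_of_mem_δ htB).1 (h.2 B hB)
  · rintro ⟨B, hB, ls, rfl, qf, hp, hqf⟩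
    refine ⟨qf, .cons (mem_disjUnion_δ.2 (.inl ⟨B, hB, rfl⟩)) (hp.mono fun t ht => ?_),
      mem_foldr_union.2 ⟨B, hB, hqf⟩⟩
    exact mem_disjUnion_δ.2 (.inr ⟨B, hB, ht⟩)

lemma vaSem_disjUnion (h : PartsDisjoint q0 parts) (d : List Sig) :
    vaSem (VA.disjUnion q0 parts) d = {μ | ∃ B ∈ parts, μ ∈ vaSem B d} := by
  ext μ
  constructor
  · rintro ⟨_, hacc, hread, hvalid, rfl⟩
    obtain ⟨B, hB, ls, rfl, haccB⟩ := (acceptsWith_disjUnion_iff h).1 hacc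
    exact ⟨B, hB, ls, haccB, by rwa [readWord_eps_cons] at hread,
      (validLabels_eps_cons ls).1 hvalid, runMapping_eps_cons ls⟩
  · rintro ⟨B, hB, ls, hacc, hread, hvalid, rfl⟩
    exact ⟨.eps :: ls, (acceptsWith_disjUnion_iff h).2 ⟨B, hB, ls, rfl, hacc⟩,
      by rwa [readWord_eps_cons], (validLabels_eps_cons ls).2 hvalid, (runMapping_eps_cons ls).symm⟩

end DisjUnion

section Component

-- The shift by one keeps the state `0` free for the initial state of the disjoint union.
def tagState (X : Finset ℕ) (q : ℕ) (S : Finset ℕ) : ℕ := Encodable.encode (X, q, S) + 1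

lemma tagState_ne_zero (X : Finset ℕ) (q : ℕ) (S : Finset ℕ) : tagState X q S ≠ 0 :=
  Nat.succ_ne_zero _

lemma tagState_inj {X X' S S' : Finset ℕ} {q q' : ℕ} :
    tagState X q S = tagState X' q' S' ↔ X = X' ∧ q = q' ∧ S = S' := by
  simp [tagState, Encodable.encode_injective.eq_iff]

def VA.component (A : VA Sig) (X : Finset ℕ) : VA Sig where
  q0 := tagState X A.q0 ∅
  F := A.F.image fun q => tagState X q X
  δ := ((A.δ.filter fun t => labelVars t.2.1 ⊆ X) ×ˢ X.powerset).image fun tS =>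
    (tagState X tS.1.1 tS.2, tS.1.2.1, tagState X tS.1.2.2 (tS.2 ∪ openedVars tS.1.2.1))

variable {A : VA Sig} {X : Finset ℕ}

lemma mem_component_δ {s m : ℕ} {l : VLabel Sig} :
    (s, l, m) ∈ (A.component X).δ ↔ ∃ p q S, (p, l, q) ∈ A.δ ∧ labelVars l ⊆ X ∧ S ⊆ X ∧
      s = tagState X p S ∧ m = tagState X q (S ∪ openedVars l) := by
  simp only [VA.component, Finset.mem_image, Finset.mem_product, Finset.mem_filter,
    Finset.mem_powerset, Prod.exists, Prod.mk.injEq]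
  constructor
  · rintro ⟨p, l, q, S, ⟨⟨ht, hl⟩, hS⟩, rfl, rfl, rfl⟩
    exact ⟨p, q, S, ht, hl, hS, rfl, rfl⟩
  · rintro ⟨p, q, S, ht, hl, hS, rfl, rfl⟩
    exact ⟨p, l, q, S, ⟨⟨ht, hl⟩, hS⟩, rfl, rfl, rfl⟩

lemma VA.PathFrom.component {p q : ℕ} {ls : List (VLabel Sig)} (hp : A.PathFrom p ls q)
    (hX : ∀ l ∈ ls, labelVars l ⊆ X) {S : Finset ℕ} (hS : S ⊆ X) :
    (A.component X).PathFrom (tagState X p S) ls (tagState X q (S ∪ opensOf ls)) := by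
  induction hp generalizing S with
  | nil q => simpa [opensOf] using .nil _
  | @cons p q r l ls ht _ ih =>
    simp only [List.mem_cons, forall_eq_or_imp] at hX
    have hS' : S ∪ openedVars l ⊆ X :=
      Finset.union_subset hS ((openedVars_subset_labelVars l).trans hX.1)
    have htail := ih hX.2 hS'
    rw [Finset.union_assoc] at htail
    exact .cons (mem_component_δ.2 ⟨p, q, S, ht, hX.1, hS, rfl, rfl⟩) htail

lemma VA.PathFrom.of_component {s f : ℕ} {ls : List (VLabel Sig)}
    (hp : (A.component X).PathFrom s ls f) {p : ℕ} {S : Finset ℕ} (hs : s = tagState X p S) :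
    ∃ q, A.PathFrom p ls q ∧ (∀ l ∈ ls, labelVars l ⊆ X) ∧
      f = tagState X q (S ∪ opensOf ls) := by
  induction hp generalizing p S with
  | nil q => exact ⟨p, .nil p, by simp, by simp [opensOf, hs]⟩
  | cons ht _ ih =>
    obtain ⟨p', q', S', htA, hlX, -, hs', rfl⟩ := mem_component_δ.1 ht
    obtain ⟨-, rfl, rfl⟩ := tagState_inj.1 (hs'.symm.trans hs)
    obtain ⟨r, hpath, hX, hf⟩ := ih rfl
    refine ⟨r, .cons htA hpath, ?_, by rw [hf, opensOf, Finset.union_assoc]⟩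
    simpa [hlX] using hX

lemma acceptsWith_component_iff {ls : List (VLabel Sig)} :
    AcceptsWith (A.component X) ls ↔
      AcceptsWith A ls ∧ (∀ l ∈ ls, labelVars l ⊆ X) ∧ opensOf ls = X := by
  constructor
  · rintro ⟨_, hp, hqf⟩
    obtain ⟨qf, hqfA, rfl⟩ := Finset.mem_image.1 hqf
    obtain ⟨q, hpath, hX, hf⟩ := hp.of_component rfl
    obtain ⟨-, rfl, hopen⟩ := tagState_inj.1 hf
    exact ⟨⟨qf, hpath, hqfA⟩, hX, by simpa using hopen.symm⟩
  · rintro ⟨⟨qf, hp, hqf⟩, hX, hopen⟩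
    refine ⟨tagState X qf X, ?_, Finset.mem_image_of_mem _ hqf⟩
    show (A.component X).PathFrom (tagState X A.q0 ∅) ls _
    simpa [hopen] using hp.component hX (Finset.empty_subset X)

lemma exists_eq_tagState_of_mem_statesOf {s : ℕ} (hs : s ∈ statesOf (A.component X)) :
    ∃ q S, s = tagState X q S := by
  simp only [statesOf, Finset.mem_insert, Finset.mem_union, Finset.mem_image, Prod.exists] at hs
  rcases hs with rfl | (hs | ⟨_, _, _, ht, rfl⟩) | ⟨_, _, _, ht, rfl⟩
  · exact ⟨A.q0, ∅, rfl⟩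
  · obtain ⟨q, -, rfl⟩ := Finset.mem_image.1 hs
    exact ⟨q, X, rfl⟩
  · obtain ⟨p, -, S, -, -, -, rfl, -⟩ := mem_component_δ.1 ht
    exact ⟨p, S, rfl⟩
  · obtain ⟨-, q, S, -, -, -, -, rfl⟩ := mem_component_δ.1 ht
    exact ⟨q, _, rfl⟩

lemma varsOf_component_subset : varsOf (A.component X) ⊆ X := by
  intro x hx
  obtain ⟨⟨s, l, m⟩, ht, hx⟩ := Finset.mem_biUnion.1 hx
  obtain ⟨-, -, -, -, hlX, -⟩ := mem_component_δ.1 ht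
  exact hlX hx

lemma functionalVA_component (h : A.Sequential) :
    FunctionalVA (A.component X) := by
  refine ⟨fun ls hls => h ls (acceptsWith_component_iff.1 hls).1, fun ls hls x hx => ?_⟩
  obtain ⟨hacc, -, hopen⟩ := acceptsWith_component_iff.1 hls
  have hxo : .openv x ∈ ls := mem_opensOf.1 (hopen ▸ varsOf_component_subset hx)
  exact ⟨hxo, ((h ls hacc) x).2.2.1.1 hxo⟩

end Component

lemma vaSem_eq_setOf_mem_vaSem_component (A : VA Sig) (d : List Sig) :
    vaSem A d = {μ | ∃ X ⊆ varsOf A, μ ∈ vaSem (A.component X) d} := by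
  ext μ
  constructor
  · rintro ⟨ls, ⟨qf, hp, hqf⟩, hread, hvalid, rfl⟩
    have hvars : opensOf ls ⊆ varsOf A := fun x hx =>
      hp.labelVars_subset _ (mem_opensOf.1 hx) (by simp [labelVars])
    exact ⟨opensOf ls, hvars, ls, acceptsWith_component_iff.2
      ⟨⟨qf, hp, hqf⟩, hvalid.labelVars_subset_opensOf, rfl⟩, hread, hvalid, rfl⟩
  · rintro ⟨X, -, ls, hacc, hread, hvalid, rfl⟩
    exact ⟨ls, (acceptsWith_component_iff.1 hacc).1, hread, hvalid, rfl⟩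

lemma partsDisjoint_components (A : VA Sig) :
    PartsDisjoint 0 ((varsOf A).powerset.toList.map A.component) := by
  refine ⟨List.pairwise_map.2 ((varsOf A).powerset.nodup_toList.imp fun hXY => ?_), ?_⟩
  · refine Finset.disjoint_left.2 fun s hsX hsY => hXY ?_
    obtain ⟨q, S, rfl⟩ := exists_eq_tagState_of_mem_statesOf hsX
    obtain ⟨q', S', hs⟩ := exists_eq_tagState_of_mem_statesOf hsY
    exact (tagState_inj.1 hs).1
  · simp only [List.mem_map, forall_exists_index, and_imp, forall_apply_eq_imp_iff₂]
    intro X _ h0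
    obtain ⟨q, S, hs⟩ := exists_eq_tagState_of_mem_statesOf h0
    exact tagState_ne_zero X q S hs.symm

end Spanners

namespace Spanners

variable {Sig : Type} [DecidableEq Sig]

theorem statement8 (A : VA Sig) (h : A.Sequential) :
    ∃ A' : VA Sig, DisjFunctionalVA A' ∧ ∀ d : List Sig, vaSem A' d = vaSem A d := by
  set parts := (varsOf A).powerset.toList.map A.component
  have hparts : PartsDisjoint 0 parts := partsDisjoint_components A
  refine ⟨VA.disjUnion 0 parts, ⟨parts, ?_, hparts.1, hparts.2, rfl, rfl⟩, fun d => ?_⟩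
  · simp only [parts, List.mem_map]
    rintro _ ⟨X, -, rfl⟩
    exact functionalVA_component h
  · rw [vaSem_disjUnion hparts, vaSem_eq_setOf_mem_vaSem_component A d]
    simp [parts]

end Spanners
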